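/- arXiv:2308.13186 — 3 statements merged into one kernel-verified Lean document; each statement's English description precedes it below -/
import Mathlib

section
/- Every element c ∈ R with Kdim(R/cR) < m is regular in R, i.e., c is a non-zero-divisor. -/
/-!
A nonzero right ideal `A` of a prime right noetherian ring has the Krull dimension of `R`.
Pick `t ∈ R a` (`0 ≠ a ∈ A`) whose right annihilator is maximal among those of the nonzero
elements of `R a`; then every `s` with `s t ≠ 0` is injective on `t R`. Using primeness, inside
any right ideal `Q ≠ 0` this yields `0 ≠ B = t' R ≤ Q` and `P = r.ann (t' r')` with `B ∩ P = 0`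
and `Kdim (R / P) ≤ Kdim (t R)`. Hence a right ideal `C`, maximal among those disjoint from some
`Q` with `Kdim (R / Q) ≤ Kdim A`, could be enlarged to `C ⊕ B` (disjoint from `Q ∩ P`) unless
`Q = 0`, which gives `Kdim R ≤ Kdim A`.

If `Kdim (R / c R) < Kdim R` then `x c = 0` makes `x R` an image of `R / c R`, and by Fitting's
lemma `r.ann c ∩ c ^ k R = 0` for large `k`, so `r.ann c` embeds in `R / c ^ k R`, which is
filtered by images of `R / c R`. Both right ideals are therefore zero.
-/

set_option linter.unusedVariables false

/-- `devLE k A` : the deviation (in the Gabriel–Rentschler sense) of the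
poset `A` is `≤ k` (for `k : ℕ`).  `devLE 0 A` says every descending chain
eventually stabilizes (DCC), and `devLE (k+1) A` says that in any descending
chain all but finitely many of the factor intervals have deviation `≤ k`. -/
def devLE : ℕ → (A : Type*) → [inst : Preorder A] → Prop
  | 0, A, _ => ∀ f : ℕ → A, Antitone f → ∃ N, ∀ i, N ≤ i → f (i + 1) = f i
  | (k+1), A, _ => ∀ f : ℕ → A, Antitone f →
      ∃ N, ∀ i, N ≤ i → devLE k (Set.Icc (f (i + 1)) (f i))

/-- The Gabriel–Rentschler Krull dimension of the right `R`-module `M`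
(a module over `Rᵐᵒᵖ`) is `≤ k` : the deviation of its submodule lattice is `≤ k`. -/
def kdimLE (R M : Type*) [Ring R] [AddCommGroup M] [Module Rᵐᵒᵖ M] (k : ℕ) : Prop :=
  devLE k (Submodule Rᵐᵒᵖ M)

/-- `c` is a regular element of `R` (neither a left nor a right zero divisor). -/
def regElem (R : Type*) [Ring R] (c : R) : Prop :=
  (∀ x : R, c * x = 0 → x = 0) ∧ (∀ x : R, x * c = 0 → x = 0)

/-- `C_m = {c ∈ R | Kdim(R/cR) < m}` (for `0 < m`, `Kdim < m` is `Kdim ≤ m-1`). -/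
def rCm (R : Type*) [Ring R] (m : ℕ) : Set R :=
  {c | kdimLE R (R ⧸ Submodule.span Rᵐᵒᵖ ({c} : Set R)) (m - 1)}

/-- The m-Gabriel filter `g = {right ideals I | Kdim(R/I) < m}`. -/
def gFilt (R : Type*) [Ring R] (m : ℕ) : Set (Submodule Rᵐᵒᵖ R) :=
  {I | kdimLE R (R ⧸ I) (m - 1)}

/-- A right ideal `P` is a (two-sided) prime ideal of `R`. -/
def isTwoSidedPrime (R : Type*) [Ring R] (P : Submodule Rᵐᵒᵖ R) : Prop :=
  (∀ a ∈ P, ∀ r : R, r * a ∈ P) ∧ P ≠ ⊤ ∧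
    ∀ a b : R, (∀ r : R, a * r * b ∈ P) → a ∈ P ∨ b ∈ P

/-- `c ∈ C(P)` : `c` is regular modulo `P`. -/
def regModP (R : Type*) [Ring R] (P : Submodule Rᵐᵒᵖ R) (c : R) : Prop :=
  ∀ x : R, (c * x ∈ P → x ∈ P) ∧ (x * c ∈ P → x ∈ P)

/-- `X_m` : the set of (two-sided) prime ideals `P` with `Kdim(R/P) = m`. -/
def xSet (R : Type*) [Ring R] (m : ℕ) : Set (Submodule Rᵐᵒᵖ R) :=
  {P | isTwoSidedPrime R P ∧ kdimLE R (R ⧸ P) m ∧ ¬ kdimLE R (R ⧸ P) (m - 1)}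

/-- `V_m = ⋂_{P ∈ X_m} C(P)`. -/
def vSet (R : Type*) [Ring R] (m : ℕ) : Set R :=
  {v | ∀ P ∈ xSet R m, regModP R P v}

/-- Left multiplication by `a` as a right-module (`Rᵐᵒᵖ`-module) endomorphism of `R`. -/
def lmulHom (R : Type*) [Ring R] (a : R) : R →ₗ[Rᵐᵒᵖ] R where
  toFun x := a * x
  map_add' x y := mul_add a x y
  map_smul' r x := by
    simp [MulOpposite.smul_eq_mul_unop, mul_assoc]

/-- `Q` is a classical right quotient ring of `R` via `f : R →+* Q` :
`f` is injective, regular elements of `R` become units in `Q`, and every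
element of `Q` is a right fraction `f a * (f s)⁻¹`. -/
def isRightQuotientRing (R Q : Type*) [Ring R] [Ring Q] (f : R →+* Q) : Prop :=
  Function.Injective f ∧ (∀ s : R, regElem R s → IsUnit (f s)) ∧
    ∀ q : Q, ∃ a s : R, regElem R s ∧ q * f s = f a

/-- `R^e = {q ∈ Q | qJ ⊆ R for some J in the m-Gabriel filter}`, as a subset of `Q`. -/
def reSet (R Q : Type*) [Ring R] [Ring Q] (f : R →+* Q) (m : ℕ) : Set Q :=
  {q | ∃ J ∈ gFilt R m, ∀ j ∈ J, ∃ r : R, q * f j = f r}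

/-- The extension `A·R^e` of a set `A ⊆ R` : the additive subgroup of `Q`
generated by products `f a * q` with `a ∈ A`, `q ∈ R^e` (a right ideal of `R^e`). -/
def extSet (R Q : Type*) [Ring R] [Ring Q] (f : R →+* Q) (m : ℕ) (A : Set R) : Set Q :=
  (AddSubgroup.closure {x : Q | ∃ a ∈ A, ∃ q ∈ reSet R Q f m, x = f a * q} : Set Q)

/-- The right `R`-module structure on `Q` induced by `f : R →+* Q`. -/
def qMod (R Q : Type*) [Ring R] [Ring Q] (f : R →+* Q) : Module Rᵐᵒᵖ Q :=
  Module.compHom Q (RingHom.op f)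

open Function Submodule

section Deviation

variable {A B : Type*}

theorem devLE_of_strictMono [PartialOrder A] [Preorder B] {g : A → B} (hg : StrictMono g)
    {k : ℕ} (h : devLE k B) : devLE k A := by
  induction k generalizing A B with
  | zero =>
    intro f hf
    obtain ⟨N, hN⟩ := h (g ∘ f) (hg.monotone.comp_antitone hf)
    exact ⟨N, fun i hi => (hf i.le_succ).eq_or_lt.resolve_right fun hlt => (hg hlt).ne (hN i hi)⟩
  | succ k ih =>
    intro f hf
    obtain ⟨N, hN⟩ := h (g ∘ f) (hg.monotone.comp_antitone hf)
    refine ⟨N, fun i hi => ih (B := Set.Icc (g (f (i + 1))) (g (f i)))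
      (g := fun x => ⟨g x, hg.monotone x.2.1, hg.monotone x.2.2⟩) (fun x y hxy => ?_) (hN i hi)⟩
    exact hg hxy

theorem devLE_of_subsingleton [Preorder A] [Subsingleton A] (k : ℕ) : devLE k A := by
  induction k generalizing A with
  | zero => exact fun f _ => ⟨0, fun _ _ => Subsingleton.elim _ _⟩
  | succ k ih => exact fun f _ => ⟨0, fun _ _ => ih⟩

theorem devLE_succ [PartialOrder A] {k : ℕ} (h : devLE k A) : devLE (k + 1) A :=
  fun _ _ => ⟨0, fun _ _ => devLE_of_strictMono (Subtype.strictMono_coe _) h⟩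

theorem devLE_mono [PartialOrder A] {k l : ℕ} (hkl : k ≤ l) (h : devLE k A) : devLE l A := by
  induction l, hkl using Nat.le_induction with
  | base => exact h
  | succ l _ ih => exact devLE_succ ih

theorem devLE_prod [PartialOrder A] [PartialOrder B] {k : ℕ} (hA : devLE k A) (hB : devLE k B) :
    devLE k (A × B) := by
  induction k generalizing A B with
  | zero =>
    intro f hf
    obtain ⟨N₁, hN₁⟩ := hA (fun i => (f i).1) fun i j hij => (hf hij).1
    obtain ⟨N₂, hN₂⟩ := hB (fun i => (f i).2) fun i j hij => (hf hij).2
    exact ⟨max N₁ N₂, fun i hi =>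
      Prod.ext (hN₁ i (le_of_max_le_left hi)) (hN₂ i (le_of_max_le_right hi))⟩
  | succ k ih =>
    intro f hf
    obtain ⟨N₁, hN₁⟩ := hA (fun i => (f i).1) fun i j hij => (hf hij).1
    obtain ⟨N₂, hN₂⟩ := hB (fun i => (f i).2) fun i j hij => (hf hij).2
    refine ⟨max N₁ N₂, fun i hi => devLE_of_strictMono
      (B := Set.Icc (f (i + 1)).1 (f i).1 × Set.Icc (f (i + 1)).2 (f i).2)
      (g := fun x => (⟨x.1.1, x.2.1.1, x.2.2.1⟩, ⟨x.1.2, x.2.1.2, x.2.2.2⟩)) (fun x y hxy => ?_)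
      (ih (hN₁ i (le_of_max_le_left hi)) (hN₂ i (le_of_max_le_right hi)))⟩
    exact Prod.mk_lt_mk.mpr (Prod.mk_lt_mk.mp (Subtype.coe_lt_coe.mpr hxy))

end Deviation

section KrullDimension

variable {R M N : Type*} [Ring R] [AddCommGroup M] [Module Rᵐᵒᵖ M] [AddCommGroup N]
  [Module Rᵐᵒᵖ N] {d : ℕ}

theorem kdimLE_of_injective (f : M →ₗ[Rᵐᵒᵖ] N) (hf : Injective f) (h : kdimLE R N d) :
    kdimLE R M d :=
  devLE_of_strictMono (map_strictMono_of_injective hf) h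

theorem kdimLE_of_surjective (f : M →ₗ[Rᵐᵒᵖ] N) (hf : Surjective f) (h : kdimLE R M d) :
    kdimLE R N d :=
  devLE_of_strictMono (comap_strictMono_of_surjective hf) h

theorem kdimLE_of_le {S T : Submodule Rᵐᵒᵖ M} (hST : S ≤ T) (h : kdimLE R T d) : kdimLE R S d :=
  kdimLE_of_injective (inclusion hST) (inclusion_injective hST) h

theorem kdimLE_range (f : M →ₗ[Rᵐᵒᵖ] N) (h : kdimLE R M d) : kdimLE R (LinearMap.range f) d :=
  kdimLE_of_surjective f.rangeRestrict f.surjective_rangeRestrict h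

theorem kdimLE_map {S : Submodule Rᵐᵒᵖ M} (f : M →ₗ[Rᵐᵒᵖ] N) (h : kdimLE R S d) :
    kdimLE R (S.map f) d := by
  rw [← range_subtype S, ← LinearMap.range_comp]
  exact kdimLE_range _ h

theorem kdimLE_of_subsingleton [Subsingleton M] : kdimLE R M d :=
  devLE_of_subsingleton d

theorem kdimLE_of_submodule_of_quotient (S : Submodule Rᵐᵒᵖ M) (hS : kdimLE R S d)
    (hMS : kdimLE R (M ⧸ S) d) : kdimLE R M d :=
  devLE_of_strictMono (strictMono_comap_prod_map S) (devLE_prod hS hMS)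

theorem kdimLE_prod (hM : kdimLE R M d) (hN : kdimLE R N d) : kdimLE R (M × N) d :=
  kdimLE_of_submodule_of_quotient (LinearMap.ker (LinearMap.snd Rᵐᵒᵖ M N))
    (kdimLE_of_injective (LinearMap.fst Rᵐᵒᵖ M N ∘ₗ (LinearMap.ker _).subtype)
      (fun x y hxy => Subtype.ext (Prod.ext hxy (x.2.trans y.2.symm))) hM)
    (kdimLE_of_surjective ((LinearMap.snd Rᵐᵒᵖ M N).quotKerEquivOfSurjective
      LinearMap.snd_surjective).symm.toLinearMap (LinearEquiv.surjective _) hN)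

theorem kdimLE_quotient_inf {P Q : Submodule Rᵐᵒᵖ M} (hP : kdimLE R (M ⧸ P) d)
    (hQ : kdimLE R (M ⧸ Q) d) : kdimLE R (M ⧸ (P ⊓ Q)) d := by
  have hker : LinearMap.ker (P.mkQ.prod Q.mkQ) = P ⊓ Q := by
    rw [LinearMap.ker_prod, ker_mkQ, ker_mkQ]
  rw [← hker]
  exact kdimLE_of_injective (liftQ _ _ le_rfl)
    (LinearMap.ker_eq_bot.mp (ker_liftQ_eq_bot _ _ _ le_rfl)) (kdimLE_prod hP hQ)

theorem kdimLE_range_of_le_ker (f : M →ₗ[Rᵐᵒᵖ] N) {S : Submodule Rᵐᵒᵖ M}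
    (hS : S ≤ LinearMap.ker f) (h : kdimLE R (M ⧸ S) d) : kdimLE R (LinearMap.range f) d := by
  rw [← range_liftQ S f hS]
  exact kdimLE_range _ h

theorem kdimLE_of_disjoint {S T : Submodule Rᵐᵒᵖ M} (hST : Disjoint S T)
    (hT : kdimLE R (M ⧸ T) d) : kdimLE R S d := by
  refine kdimLE_of_injective (T.mkQ ∘ₗ S.subtype) (LinearMap.ker_eq_bot.mp ?_) hT
  rwa [LinearMap.ker_comp, ker_mkQ, ← disjoint_iff_comap_eq_bot]

end KrullDimension

section LeftMultiplication

variable {R : Type*} [Ring R] {d : ℕ}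

@[simp] theorem lmulHom_apply (a x : R) : lmulHom R a x = a * x := rfl

theorem lmulHom_mul (a b : R) : lmulHom R (a * b) = lmulHom R a ∘ₗ lmulHom R b :=
  LinearMap.ext fun x => mul_assoc a b x

theorem lmulHom_pow (a : R) (n : ℕ) : lmulHom R (a ^ n) = lmulHom R a ^ n := by
  induction n with
  | zero => ext; simp
  | succ n ih => rw [pow_succ, pow_succ, lmulHom_mul, ih, Module.End.mul_eq_comp]

theorem range_lmulHom (a : R) : LinearMap.range (lmulHom R a) = Rᵐᵒᵖ ∙ a := by
  ext x
  simp [mem_span_singleton, MulOpposite.smul_eq_mul_unop]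

theorem map_lmulHom_span_singleton (a b : R) :
    (Rᵐᵒᵖ ∙ b).map (lmulHom R a) = Rᵐᵒᵖ ∙ (a * b) := by
  rw [← range_lmulHom, ← range_lmulHom, ← LinearMap.range_comp, lmulHom_mul]

theorem span_singleton_mul_le (a b : R) : (Rᵐᵒᵖ ∙ (a * b)) ≤ Rᵐᵒᵖ ∙ a := by
  rw [← range_lmulHom, ← range_lmulHom, lmulHom_mul]
  exact LinearMap.range_comp_le_range _ _

theorem kdimLE_span_singleton_mul (a : R) {b : R} (h : kdimLE R (Rᵐᵒᵖ ∙ b) d) :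
    kdimLE R (Rᵐᵒᵖ ∙ (a * b)) d :=
  map_lmulHom_span_singleton a b ▸ kdimLE_map _ h

theorem kdimLE_quotient_ker_lmulHom {a : R} (h : kdimLE R (Rᵐᵒᵖ ∙ a) d) :
    kdimLE R (R ⧸ LinearMap.ker (lmulHom R a)) d := by
  rw [← range_lmulHom] at h
  exact kdimLE_of_surjective _ (LinearMap.quotKerEquivRange _).symm.surjective h

theorem kdimLE_quotient_span_singleton_mul {a b : R} (ha : kdimLE R (R ⧸ Rᵐᵒᵖ ∙ a) d)
    (hb : kdimLE R (R ⧸ Rᵐᵒᵖ ∙ b) d) : kdimLE R (R ⧸ Rᵐᵒᵖ ∙ (a * b)) d := by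
  have hle := span_singleton_mul_le a b
  refine kdimLE_of_submodule_of_quotient ((Rᵐᵒᵖ ∙ a).map (Rᵐᵒᵖ ∙ (a * b)).mkQ) ?_
    (kdimLE_of_surjective _ (quotientQuotientEquivQuotient _ _ hle).symm.surjective ha)
  have hker : (Rᵐᵒᵖ ∙ b) ≤ LinearMap.ker ((Rᵐᵒᵖ ∙ (a * b)).mkQ ∘ₗ lmulHom R a) := by
    rw [LinearMap.ker_comp, ker_mkQ, ← map_le_iff_le_comap, map_lmulHom_span_singleton]
  rw [← range_lmulHom a, ← LinearMap.range_comp]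
  exact kdimLE_range_of_le_ker _ hker hb

theorem kdimLE_quotient_span_singleton_pow {c : R} (hc : kdimLE R (R ⧸ Rᵐᵒᵖ ∙ c) d) (k : ℕ) :
    kdimLE R (R ⧸ Rᵐᵒᵖ ∙ (c ^ k)) d := by
  induction k with
  | zero =>
    have : Subsingleton (R ⧸ Rᵐᵒᵖ ∙ (c ^ 0)) := by
      rw [Submodule.Quotient.subsingleton_iff, pow_zero, ← range_lmulHom, LinearMap.range_eq_top]
      exact fun x => ⟨x, one_mul x⟩
    exact kdimLE_of_subsingleton
  | succ k ih => exact pow_succ c k ▸ kdimLE_quotient_span_singleton_mul ih hc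

theorem kdimLE_ker_lmulHom [IsNoetherian Rᵐᵒᵖ R] {c : R} (hc : kdimLE R (R ⧸ Rᵐᵒᵖ ∙ c) d) :
    kdimLE R (LinearMap.ker (lmulHom R c)) d := by
  obtain ⟨n, hdisj, hn⟩ := ((Module.End.eventually_disjoint_ker_pow_range_pow
    (lmulHom R c)).and (Filter.eventually_ge_atTop 1)).exists
  rw [← lmulHom_pow, range_lmulHom] at hdisj
  have hker : LinearMap.ker (lmulHom R c) ≤ LinearMap.ker (lmulHom R (c ^ n)) := by
    rw [← pow_sub_one_mul (by omega : n ≠ 0), lmulHom_mul]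
    exact LinearMap.ker_le_ker_comp _ _
  exact kdimLE_of_disjoint (hdisj.mono_left hker) (kdimLE_quotient_span_singleton_pow hc n)

end LeftMultiplication

section PrimeRing

variable {R : Type*} [Ring R] {d : ℕ}

theorem exists_mul_mul_ne_zero (hprime : ∀ a b : R, (∀ r : R, a * r * b = 0) → a = 0 ∨ b = 0)
    {a b : R} (ha : a ≠ 0) (hb : b ≠ 0) : ∃ r, a * r * b ≠ 0 := by
  by_contra! h
  exact (hprime a b h).elim ha hb

def RightAnnStable (t : R) : Prop :=
  ∀ s y : R, s * t ≠ 0 → s * t * y = 0 → t * y = 0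

theorem RightAnnStable.mul_left {t : R} (ht : RightAnnStable t) (s : R) :
    RightAnnStable (s * t) := by
  intro s' y h hy
  rw [← mul_assoc] at h hy
  rw [mul_assoc, ht _ _ h hy, mul_zero]

theorem RightAnnStable.disjoint_span_ker {t w : R} (ht : RightAnnStable t) (hw : w * t ≠ 0) :
    Disjoint (Rᵐᵒᵖ ∙ t) (LinearMap.ker (lmulHom R w)) := by
  rw [disjoint_def, ← range_lmulHom]
  rintro _ ⟨y, rfl⟩ hy
  rw [LinearMap.mem_ker, lmulHom_apply, lmulHom_apply, ← mul_assoc] at hy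
  exact ht w y hw hy

theorem exists_rightAnnStable [IsNoetherian Rᵐᵒᵖ R] {a : R} (ha : a ≠ 0) :
    ∃ s, s * a ≠ 0 ∧ RightAnnStable (s * a) := by
  obtain ⟨_, ⟨s, hs, rfl⟩, hmax⟩ := set_has_maximal_iff_noetherian.mpr ‹_›
    ((fun s => LinearMap.ker (lmulHom R (s * a))) '' {s | s * a ≠ 0}) ⟨_, 1, by simpa, rfl⟩
  refine ⟨s, hs, fun s' y h hy => ?_⟩
  have hle : LinearMap.ker (lmulHom R (s * a)) ≤ LinearMap.ker (lmulHom R (s' * (s * a))) := by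
    rw [lmulHom_mul s']
    exact LinearMap.ker_le_ker_comp _ _
  have heq := hle.eq_of_not_lt
    (hmax _ ⟨s' * s, (by rwa [← mul_assoc] at h : s' * s * a ≠ 0), by simp only [mul_assoc]⟩)
  exact heq.ge hy

theorem exists_disjoint_of_rightAnnStable
    (hprime : ∀ a b : R, (∀ r : R, a * r * b = 0) → a = 0 ∨ b = 0) {t : R}
    (ht : RightAnnStable t) (ht0 : t ≠ 0) (htd : kdimLE R (Rᵐᵒᵖ ∙ t) d)
    {Q : Submodule Rᵐᵒᵖ R} (hQ : Q ≠ ⊥) :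
    ∃ B P : Submodule Rᵐᵒᵖ R, B ≠ ⊥ ∧ B ≤ Q ∧ Disjoint B P ∧ kdimLE R (R ⧸ P) d := by
  obtain ⟨q, hqQ, hq⟩ := (Submodule.ne_bot_iff Q).mp hQ
  obtain ⟨r, hr⟩ := exists_mul_mul_ne_zero hprime hq ht0
  obtain ⟨r', hr'⟩ := exists_mul_mul_ne_zero hprime hr hr
  refine ⟨Rᵐᵒᵖ ∙ (q * r * t), LinearMap.ker (lmulHom R (q * r * t * r')), by simpa using hr,
    (span_singleton_le_iff_mem _ _).mpr ?_, (ht.mul_left _).disjoint_span_ker hr',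
    kdimLE_quotient_ker_lmulHom
      (kdimLE_of_le (span_singleton_mul_le _ _) (kdimLE_span_singleton_mul _ htd))⟩
  rw [mul_assoc]
  exact Q.smul_mem (MulOpposite.op (r * t)) hqQ

theorem kdimLE_of_rightAnnStable [IsNoetherian Rᵐᵒᵖ R]
    (hprime : ∀ a b : R, (∀ r : R, a * r * b = 0) → a = 0 ∨ b = 0) {t : R}
    (ht : RightAnnStable t) (ht0 : t ≠ 0) (htd : kdimLE R (Rᵐᵒᵖ ∙ t) d) : kdimLE R R d := by
  by_contra hR
  obtain ⟨C, ⟨Q, hQ, hCQ⟩, hmax⟩ := set_has_maximal_iff_noetherian.mpr ‹_›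
    {C : Submodule Rᵐᵒᵖ R | ∃ Q : Submodule Rᵐᵒᵖ R, kdimLE R (R ⧸ Q) d ∧ Disjoint C Q}
    ⟨⊥, ⊤, kdimLE_of_subsingleton, disjoint_bot_left⟩
  have hQ0 : Q ≠ ⊥ := by
    rintro rfl
    exact hR (kdimLE_of_surjective _ (quotEquivOfEqBot ⊥ rfl).surjective hQ)
  obtain ⟨B, P, hB0, hBQ, hBP, hP⟩ := exists_disjoint_of_rightAnnStable hprime ht ht0 htd hQ0
  refine hmax (C ⊔ B) ⟨Q ⊓ P, kdimLE_quotient_inf hQ hP, ?_⟩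
    (left_lt_sup.mpr fun hBC => hB0 ((hCQ.mono_left hBC).eq_bot_of_le hBQ))
  rw [disjoint_iff, ← inf_assoc, sup_comm, sup_inf_assoc_of_le C hBQ, hCQ.eq_bot, sup_bot_eq,
    hBP.eq_bot]

theorem eq_bot_of_kdimLE [IsNoetherian Rᵐᵒᵖ R]
    (hprime : ∀ a b : R, (∀ r : R, a * r * b = 0) → a = 0 ∨ b = 0) (hR : ¬ kdimLE R R d)
    {A : Submodule Rᵐᵒᵖ R} (hA : kdimLE R A d) : A = ⊥ := by
  by_contra hA0
  obtain ⟨a, haA, ha⟩ := (Submodule.ne_bot_iff A).mp hA0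
  obtain ⟨s, hs, hst⟩ := exists_rightAnnStable ha
  exact hR (kdimLE_of_rightAnnStable hprime hst hs
    (kdimLE_span_singleton_mul s (kdimLE_of_le ((span_singleton_le_iff_mem _ _).mpr haA) hA)))

theorem regElem_of_kdimLE_quotient [IsNoetherian Rᵐᵒᵖ R]
    (hprime : ∀ a b : R, (∀ r : R, a * r * b = 0) → a = 0 ∨ b = 0) (hR : ¬ kdimLE R R d)
    {c : R} (hc : kdimLE R (R ⧸ Rᵐᵒᵖ ∙ c) d) : regElem R c := by
  refine ⟨fun x hx => ?_, fun x hx => ?_⟩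
  · have hker := eq_bot_of_kdimLE hprime hR (kdimLE_ker_lmulHom hc)
    rw [LinearMap.ker_eq_bot] at hker
    exact hker (by simpa using hx)
  · have hle : (Rᵐᵒᵖ ∙ c) ≤ LinearMap.ker (lmulHom R x) := by
      simpa [span_singleton_le_iff_mem] using hx
    have hx0 := eq_bot_of_kdimLE hprime hR (kdimLE_range_of_le_ker _ hle hc)
    rwa [range_lmulHom, span_singleton_eq_bot] at hx0

end PrimeRing

theorem stmt1_general (R : Type) [Ring R] [IsNoetherian Rᵐᵒᵖ R]
    (hprime : ∀ a b : R, (∀ r : R, a * r * b = 0) → a = 0 ∨ b = 0)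
    (n m : ℕ) (hmn : m < n)
    (hdim : kdimLE R R n ∧ ¬ kdimLE R R (n - 1)) :
    ∀ c ∈ rCm R m, regElem R c := fun _ hc =>
  regElem_of_kdimLE_quotient hprime (fun h => hdim.2 (devLE_mono (by omega) h)) hc

theorem stmt1 (R : Type) [Ring R] [Nontrivial R] [IsNoetherian Rᵐᵒᵖ R]
    (hprime : ∀ a b : R, (∀ r : R, a * r * b = 0) → a = 0 ∨ b = 0)
    (n m : ℕ) (hm : 0 < m) (hmn : m < n)
    (hdim : kdimLE R R n ∧ ¬ kdimLE R R (n - 1)) :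
    ∀ c ∈ rCm R m, regElem R c :=
  stmt1_general R hprime n m hmn hdim
end

section
/- If X_m has the right intersection condition (i.e., every right ideal meeting C(P) for each P ∈ X_m also meets V_m = ∩_{P∈X_m} C(P)), then g ⊆ v, where g = {right ideals I : Kdim(R/I) < m} and v = {right ideals I : I ∩ V_m ≠ ∅}. -/
set_option linter.unusedVariables false

/-!
Fix `P ∈ X_m` and a right ideal `I` with `Kdim(R/I) < m`; by the intersection condition it
suffices that `I` meets `C(P)`. Write `R̄ = R/P`, a prime right noetherian ring. Goldie's
argument gives `t ∈ I` with `Ī ∩ r(t̄) = 0`, so `r(t̄)` embeds in `R̄/Ī` and has Krull dimension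
`< m`. In a prime ring every nonzero right ideal has the Krull dimension of the ring, hence
`r(t̄) = 0`. Then `t̄R̄ ≅ R̄`, the chain `t̄ⁱR̄` shows `Kdim(R̄/t̄R̄) < m`, and a nonzero `x̄` with
`x̄t̄ = 0` would give the right ideal `x̄R̄`, a quotient of `R̄/t̄R̄`, of dimension `< m`. So `t̄`
is regular.
-/

open Function

section Deviation

variable {A B L : Type*}

def iccOrderEmbedding [Preorder A] [Preorder B] (e : A ↪o B) (a b : A) :
    Set.Icc a b ↪o Set.Icc (e a) (e b) where
  toFun x := ⟨e x, e.monotone x.2.1, e.monotone x.2.2⟩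
  inj' _ _ h := Subtype.ext (e.injective (congrArg Subtype.val h))
  map_rel_iff' := e.le_iff_le

theorem devLE_of_orderEmbedding :
    ∀ (k : ℕ) {A B : Type*} [Preorder A] [Preorder B], (A ↪o B) → devLE k B → devLE k A
  | 0, _, _, _, _, e, hB => fun f hf =>
    let ⟨N, hN⟩ := hB (e ∘ f) (e.monotone.comp_antitone hf)
    ⟨N, fun i hi => e.injective (hN i hi)⟩
  | k + 1, _, _, _, _, e, hB => fun f hf =>
    let ⟨N, hN⟩ := hB (e ∘ f) (e.monotone.comp_antitone hf)
    ⟨N, fun i hi => devLE_of_orderEmbedding k (iccOrderEmbedding e _ _) (hN i hi)⟩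

theorem devLE_congr [Preorder A] [Preorder B] {k : ℕ} (e : A ≃o B) : devLE k A ↔ devLE k B :=
  ⟨devLE_of_orderEmbedding k e.symm.toOrderEmbedding,
    devLE_of_orderEmbedding k e.toOrderEmbedding⟩

def iccSubtypeOrderIso [Preorder L] {p q : L} (u v : Set.Icc p q) :
    Set.Icc u v ≃o Set.Icc (u : L) v where
  toFun x := ⟨x, x.2⟩
  invFun x := ⟨⟨x, u.2.1.trans x.2.1, x.2.2.trans v.2.2⟩, x.2⟩
  map_rel_iff' := Iff.rfl

def iccInfRight [Lattice L] (a b n : L) : Set.Icc a b →o Set.Icc (a ⊓ n) (b ⊓ n) where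
  toFun x := ⟨x ⊓ n, inf_le_inf_right n x.2.1, inf_le_inf_right n x.2.2⟩
  monotone' _ _ h := inf_le_inf_right n h

def iccSupRight [Lattice L] (a b n : L) : Set.Icc a b →o Set.Icc (a ⊔ n) (b ⊔ n) where
  toFun x := ⟨x ⊔ n, sup_le_sup_right x.2.1 n, sup_le_sup_right x.2.2 n⟩
  monotone' _ _ (h : (_ : L) ≤ _) := sup_le_sup_right h n

theorem devLE_Icc_of_inf_of_sup [Lattice L] [IsModularLattice L] :
    ∀ (k : ℕ) (a b n : L), devLE k (Set.Icc (a ⊓ n) (b ⊓ n)) →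
      devLE k (Set.Icc (a ⊔ n) (b ⊔ n)) → devLE k (Set.Icc a b)
  | 0, a, b, n, hinf, hsup => fun f hf => by
    obtain ⟨N₁, hN₁⟩ := hinf _ ((iccInfRight a b n).monotone.comp_antitone hf)
    obtain ⟨N₂, hN₂⟩ := hsup _ ((iccSupRight a b n).monotone.comp_antitone hf)
    refine ⟨max N₁ N₂, fun i hi => Subtype.ext ?_⟩
    exact eq_of_le_of_inf_le_of_sup_le (hf i.le_succ)
      (congrArg Subtype.val (hN₁ i (le_of_max_le_left hi))).ge
      (congrArg Subtype.val (hN₂ i (le_of_max_le_right hi))).ge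
  | k + 1, a, b, n, hinf, hsup => fun f hf => by
    obtain ⟨N₁, hN₁⟩ := hinf _ ((iccInfRight a b n).monotone.comp_antitone hf)
    obtain ⟨N₂, hN₂⟩ := hsup _ ((iccSupRight a b n).monotone.comp_antitone hf)
    refine ⟨max N₁ N₂, fun i hi => (devLE_congr (iccSubtypeOrderIso _ _)).mpr ?_⟩
    exact devLE_Icc_of_inf_of_sup k _ _ n
      ((devLE_congr (iccSubtypeOrderIso _ _)).mp (hN₁ i (le_of_max_le_left hi)))
      ((devLE_congr (iccSubtypeOrderIso _ _)).mp (hN₂ i (le_of_max_le_right hi)))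

theorem devLE_of_Iic_of_Ici [Lattice L] [BoundedOrder L] [IsModularLattice L] {k : ℕ} (n : L)
    (hle : devLE k (Set.Iic n)) (hge : devLE k (Set.Ici n)) : devLE k L := by
  refine devLE_of_orderEmbedding k
    (OrderEmbedding.ofMapLEIff (fun x => (⟨x, bot_le, le_top⟩ : Set.Icc (⊥ : L) ⊤))
      fun _ _ => Iff.rfl) (devLE_Icc_of_inf_of_sup k ⊥ ⊤ n ?_ ?_)
  · exact devLE_of_orderEmbedding k (OrderEmbedding.ofMapLEIff
      (fun x => (⟨x, x.2.2.trans inf_le_right⟩ : Set.Iic n)) fun _ _ => Iff.rfl) hle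
  · exact devLE_of_orderEmbedding k (OrderEmbedding.ofMapLEIff
      (fun x => (⟨x, le_sup_right.trans x.2.1⟩ : Set.Ici n)) fun _ _ => Iff.rfl) hge

end Deviation

section ModuleDeviation

variable {A M N : Type*} [Ring A] [AddCommGroup M] [Module A M] [AddCommGroup N] [Module A N]
  {k : ℕ}

theorem devLE_submodule_of_injective {f : M →ₗ[A] N} (hf : Injective f)
    (h : devLE k (Submodule A N)) : devLE k (Submodule A M) :=
  devLE_of_orderEmbedding k
    (OrderEmbedding.ofMapLEIff (Submodule.map f) (Submodule.map_le_map_iff_of_injective hf)) h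

theorem devLE_submodule_of_surjective {f : M →ₗ[A] N} (hf : Surjective f)
    (h : devLE k (Submodule A M)) : devLE k (Submodule A N) :=
  devLE_of_orderEmbedding k (OrderEmbedding.ofMapLEIff (Submodule.comap f)
    fun _ _ => Submodule.comap_le_comap_iff_of_surjective hf) h

theorem devLE_submodule_of_submodule_of_quotient (p : Submodule A M)
    (hp : devLE k (Submodule A p)) (hq : devLE k (Submodule A (M ⧸ p))) :
    devLE k (Submodule A M) :=
  devLE_of_Iic_of_Ici p ((devLE_congr p.mapIic).mp hp) ((devLE_congr p.comapMkQRelIso).mp hq)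

theorem devLE_submodule_sup {p q : Submodule A M} (hp : devLE k (Submodule A p))
    (hq : devLE k (Submodule A q)) : devLE k (Submodule A ↥(p ⊔ q)) := by
  refine devLE_submodule_of_submodule_of_quotient (Submodule.comap (p ⊔ q).subtype q) ?_ ?_
  · exact devLE_submodule_of_injective
      (Submodule.comapSubtypeEquivOfLe le_sup_right).injective hq
  · exact devLE_submodule_of_surjective
      (f := (LinearMap.quotientInfEquivSupQuotient p q).toLinearMap ∘ₗ Submodule.mkQ _)
      ((LinearMap.quotientInfEquivSupQuotient p q).surjective.comp
        (Submodule.mkQ_surjective _)) hp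

theorem devLE_submodule_map (f : M →ₗ[A] N) {p : Submodule A M}
    (hp : devLE k (Submodule A p)) : devLE k (Submodule A ↥(p.map f)) :=
  devLE_submodule_of_surjective (f.submoduleMap_surjective p) hp

theorem devLE_submodule_of_disjoint {p q : Submodule A M} (hpq : Disjoint p q)
    (h : devLE k (Submodule A (M ⧸ q))) : devLE k (Submodule A p) := by
  refine devLE_submodule_of_injective (f := q.mkQ ∘ₗ p.subtype) ?_ h
  rw [← LinearMap.ker_eq_bot, LinearMap.ker_comp, Submodule.ker_mkQ,
    ← Submodule.disjoint_iff_comap_eq_bot]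
  exact hpq

theorem devLE_range_of_le_ker {f : M →ₗ[A] N} {p : Submodule A M} (hp : p ≤ LinearMap.ker f)
    (h : devLE k (Submodule A (M ⧸ p))) : devLE k (Submodule A (LinearMap.range f)) :=
  devLE_submodule_of_surjective (f := f.quotKerEquivRange.toLinearMap ∘ₗ Submodule.factor hp)
    (f.quotKerEquivRange.surjective.comp (Submodule.factor_surjective hp)) h

theorem map_le_of_maximal_devLE {T : Submodule A M}
    (hT : Maximal (fun Y : Submodule A M => devLE k (Submodule A Y)) T) (f : M →ₗ[A] M) :
    T.map f ≤ T :=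
  le_sup_right.trans (hT.2 (devLE_submodule_sup hT.1 (devLE_submodule_map f hT.1)) le_sup_left)

/-- The factor `range f ^ N / range f ^ (N + 1)` of the chain of images of an injective `f`
is isomorphic to `M / range f`. -/
theorem devLE_quotient_range_of_injective {f : Module.End A M} (hf : Injective f)
    (h : devLE (k + 1) (Submodule A M)) : devLE k (Submodule A (M ⧸ LinearMap.range f)) := by
  have hanti : Antitone fun i : ℕ => LinearMap.range (f ^ i) :=
    antitone_nat_of_succ_le fun i => by
      rw [pow_succ, Module.End.mul_eq_comp]
      exact LinearMap.range_comp_le_range _ _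
  obtain ⟨N, hN⟩ := h _ hanti
  have hrange : (LinearMap.range f).map (f ^ N) = LinearMap.range (f ^ (N + 1)) := by
    rw [pow_succ, Module.End.mul_eq_comp, LinearMap.range_comp]
  have hshift : Set.Ici (LinearMap.range f) ↪o
      Set.Icc (LinearMap.range (f ^ (N + 1))) (LinearMap.range (f ^ N)) :=
    OrderEmbedding.ofMapLEIff
      (fun X => ⟨X.1.map (f ^ N), hrange ▸ Submodule.map_mono X.2,
        LinearMap.range_eq_map (f ^ N) ▸ Submodule.map_mono le_top⟩)
      fun X Y => Submodule.map_le_map_iff_of_injective (Module.End.iterate_injective hf N) _ _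
  exact (devLE_congr (Submodule.comapMkQRelIso _)).mpr
    (devLE_of_orderEmbedding k hshift (hN N le_rfl))

end ModuleDeviation

section RightIdeals

variable {R : Type*} [Ring R] {P : Submodule Rᵐᵒᵖ R}

theorem rightIdeal_mul_mem {X : Submodule Rᵐᵒᵖ R} {x : R} (hx : x ∈ X) (r : R) : x * r ∈ X :=
  X.smul_mem (MulOpposite.op r) hx

def annModRight (P : Submodule Rᵐᵒᵖ R) (c : R) : Submodule Rᵐᵒᵖ R :=
  P.comap (lmulHom R c)

theorem mem_annModRight {c y : R} : y ∈ annModRight P c ↔ c * y ∈ P :=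
  Iff.rfl

theorem mul_mem_of_pow_mem_of_ann_maximal (hleft : ∀ a ∈ P, ∀ r : R, r * a ∈ P) {b : R}
    (hb : ∀ x, x * b ∉ P → ∀ y, x * b * y ∈ P → b * y ∈ P) (r : R) :
    ∀ j : ℕ, (r * b) ^ (j + 1) ∈ P → b * (r * b) ∈ P
  | 0, h => hleft _ (by simpa using h) b
  | j + 1, h => by
    by_cases hj : (r * b) ^ (j + 1) ∈ P
    · exact mul_mem_of_pow_mem_of_ann_maximal hleft hb r j hj
    · refine hb ((r * b) ^ j * r) ?_ (r * b) ?_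
      · rwa [mul_assoc, ← pow_succ]
      · rwa [mul_assoc _ r b, ← pow_succ, ← pow_succ]

/-- Levitzki's argument: were `X` nil modulo `P`, an element `b = r₀a` of `X` with maximal
right annihilator would satisfy `bRb ⊆ P`. -/
theorem exists_mem_forall_pow_notMem [IsNoetherian Rᵐᵒᵖ R]
    (hleft : ∀ a ∈ P, ∀ r : R, r * a ∈ P)
    (hprime : ∀ a b : R, (∀ r : R, a * r * b ∈ P) → a ∈ P ∨ b ∈ P)
    {X : Submodule Rᵐᵒᵖ R} (hX : ¬ X ≤ P) : ∃ c ∈ X, ∀ k : ℕ, c ^ (k + 1) ∉ P := by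
  by_contra! hnil
  obtain ⟨a, haX, haP⟩ := SetLike.not_le_iff_exists.mp hX
  obtain ⟨r₀, hr₀, hmax⟩ := exists_maximalFor_of_wellFoundedGT (fun r : R => r * a ∉ P)
    (fun r => annModRight P (r * a)) ⟨1, by rwa [one_mul]⟩
  have hb : ∀ x, x * (r₀ * a) ∉ P → ∀ y, x * (r₀ * a) * y ∈ P → r₀ * a * y ∈ P :=
    fun x hx y hy => hmax (j := x * r₀) (show x * r₀ * a ∉ P by rwa [mul_assoc])
      (fun z (hz : r₀ * a * z ∈ P) => show x * r₀ * a * z ∈ P by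
        simpa only [mul_assoc] using hleft _ hz x)
      (show x * r₀ * a * y ∈ P by rwa [mul_assoc x r₀ a])
  have hbrb : ∀ r, r₀ * a * r * (r₀ * a) ∈ P := fun r => by
    obtain ⟨k, hk⟩ := hnil (a * (r * r₀)) (rightIdeal_mul_mem haX _)
    have hpow : (r * (r₀ * a)) ^ (k + 1 + 1) = r * r₀ * ((a * (r * r₀)) ^ (k + 1) * a) := by
      rw [mul_pow_mul, ← mul_assoc r r₀ a, pow_succ' (r * r₀ * a), mul_assoc (r * r₀) a]
    rw [mul_assoc]
    exact mul_mem_of_pow_mem_of_ann_maximal hleft hb r (k + 1)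
      (hpow ▸ hleft _ (rightIdeal_mul_mem hk a) (r * r₀))
  exact hr₀ ((hprime _ _ hbrb).elim id id)

theorem exists_mem_annModRight_mul_self_le [IsNoetherian Rᵐᵒᵖ R]
    (hleft : ∀ a ∈ P, ∀ r : R, r * a ∈ P)
    (hprime : ∀ a b : R, (∀ r : R, a * r * b ∈ P) → a ∈ P ∨ b ∈ P)
    {X : Submodule Rᵐᵒᵖ R} (hX : ¬ X ≤ P) :
    ∃ b ∈ X, b * b ∉ P ∧ annModRight P (b * b) ≤ annModRight P b := by
  obtain ⟨c, hcX, hc⟩ := exists_mem_forall_pow_notMem hleft hprime hX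
  obtain ⟨n, hn⟩ := monotone_stabilizes_iff_noetherian.mpr inferInstance
    ⟨fun k => annModRight P (c ^ (k + 1)), monotone_nat_of_le_succ fun k y
      (hy : c ^ (k + 1) * y ∈ P) => show c ^ (k + 1 + 1) * y ∈ P by
        simpa only [pow_succ' c (k + 1), mul_assoc] using hleft _ hy c⟩
  have hsq : c ^ (n + 1) * c ^ (n + 1) = c ^ (n + n + 1 + 1) := by
    rw [← pow_add]; ring_nf
  refine ⟨c ^ (n + 1), ?_, hsq ▸ hc _, ?_⟩
  · rw [pow_succ']
    exact rightIdeal_mul_mem hcX _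
  · rw [hsq]
    exact (hn (n + n + 1) (by omega)).ge

/-- `c ∈ U`, `r(c²) ⊆ r(c)` and `U ∩ r(c) = 0`, all read in `R/P`. -/
def IsGoldiePair (P : Submodule Rᵐᵒᵖ R) (c : R) (U : Submodule Rᵐᵒᵖ R) : Prop :=
  c ∈ U ∧ annModRight P (c * c) ≤ annModRight P c ∧ ∀ u ∈ U, c * u ∈ P → u ∈ P

theorem isGoldiePair_zero_bot : IsGoldiePair P 0 ⊥ :=
  ⟨zero_mem _, fun y _ => by simp [mem_annModRight, zero_mem],
    fun u hu _ => by simp [(Submodule.mem_bot _).mp hu, zero_mem]⟩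

theorem IsGoldiePair.add_sup_span (hleft : ∀ a ∈ P, ∀ r : R, r * a ∈ P) {c b : R}
    {U : Submodule Rᵐᵒᵖ R} (h : IsGoldiePair P c U)
    (hbb : annModRight P (b * b) ≤ annModRight P b) (hcb : c * b ∈ P) :
    IsGoldiePair P (c + b) (U ⊔ Submodule.span Rᵐᵒᵖ {b}) := by
  have hsplit : ∀ w r, (c + b) * (w + b * r) ∈ P → c * w ∈ P ∧ (w ∈ P → b * r ∈ P) := by
    intro w r hwr
    have hccz : c * c * (w + b * r) + c * b * (w + b * r) ∈ P := by
      have := hleft _ hwr c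
      rwa [← mul_assoc, mul_add c c b, add_mul] at this
    have hc : c * (w + b * r) ∈ P :=
      h.2.1 ((P.add_mem_iff_left (rightIdeal_mul_mem hcb _)).mp hccz)
    have hb : b * (w + b * r) ∈ P := by
      have := P.sub_mem hwr hc
      rwa [add_mul, add_sub_cancel_left] at this
    rw [mul_add, ← mul_assoc] at hc hb
    exact ⟨(P.add_mem_iff_left (rightIdeal_mul_mem hcb r)).mp hc,
      fun hw => hbb ((P.add_mem_iff_right (hleft _ hw b)).mp hb)⟩
  refine ⟨add_mem (Submodule.mem_sup_left h.1)
    (Submodule.mem_sup_right (Submodule.mem_span_singleton_self b)), fun y hy => ?_, ?_⟩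
  · rw [mem_annModRight, mul_assoc, add_mul c b y] at hy
    obtain ⟨hccy, hby⟩ := hsplit (c * y) y hy
    have hcy : c * y ∈ P := h.2.1 (by rw [mem_annModRight, mul_assoc]; exact hccy)
    rw [mem_annModRight, add_mul]
    exact add_mem hcy (hby hcy)
  · intro z hz hcz
    obtain ⟨u, hu, v, hv, rfl⟩ := Submodule.mem_sup.mp hz
    obtain ⟨r, rfl⟩ := Submodule.mem_span_singleton.mp hv
    rw [MulOpposite.smul_eq_mul_unop] at hcz ⊢
    obtain ⟨hcu, hbr⟩ := hsplit u _ hcz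
    have huP := h.2.2 u hu hcu
    exact add_mem huP (hbr huP)

/-- Goldie's argument: enlarge `U` inside `X` as long as `X ∩ r(c) ≠ 0` modulo `P`. -/
theorem exists_mem_forall_mul_mem_imp_mem [IsNoetherian Rᵐᵒᵖ R]
    (hleft : ∀ a ∈ P, ∀ r : R, r * a ∈ P)
    (hprime : ∀ a b : R, (∀ r : R, a * r * b ∈ P) → a ∈ P ∨ b ∈ P)
    (X : Submodule Rᵐᵒᵖ R) : ∃ c ∈ X, ∀ x ∈ X, c * x ∈ P → x ∈ P := by
  obtain ⟨⟨c, U⟩, ⟨hUX, hcU⟩, hmax⟩ := exists_maximalFor_of_wellFoundedGT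
    (fun cU : R × Submodule Rᵐᵒᵖ R => cU.2 ≤ X ∧ IsGoldiePair P cU.1 cU.2) Prod.snd
    ⟨(0, ⊥), bot_le, isGoldiePair_zero_bot⟩
  refine ⟨c, hUX hcU.1, fun x hxX hcx => ?_⟩
  by_contra hxP
  obtain ⟨b, ⟨hbX, hcb⟩, hbb, hbb'⟩ := exists_mem_annModRight_mul_self_le hleft hprime
    (X := X ⊓ annModRight P c) fun h => hxP (h ⟨hxX, hcx⟩)
  have hbU : b ∈ U := hmax (j := (c + b, U ⊔ Submodule.span Rᵐᵒᵖ {b}))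
    ⟨sup_le hUX ((Submodule.span_singleton_le_iff_mem _ _).mpr hbX),
      hcU.add_sup_span hleft hbb' hcb⟩
    le_sup_left (Submodule.mem_sup_right (Submodule.mem_span_singleton_self b))
  exact hbb (rightIdeal_mul_mem (hcU.2.2 b hbU hcb) b)

end RightIdeals

section PrimeQuotient

variable {R : Type*} [Ring R] {P : Submodule Rᵐᵒᵖ R}

def lmulQuot (hleft : ∀ a ∈ P, ∀ r : R, r * a ∈ P) (c : R) : (R ⧸ P) →ₗ[Rᵐᵒᵖ] R ⧸ P :=
  P.mapQ P (lmulHom R c) fun a ha => hleft a ha c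

@[simp]
theorem lmulQuot_mk (hleft : ∀ a ∈ P, ∀ r : R, r * a ∈ P) (c x : R) :
    lmulQuot hleft c (Submodule.Quotient.mk x) = Submodule.Quotient.mk (c * x) :=
  rfl

theorem mk_mem_ker_lmulQuot (hleft : ∀ a ∈ P, ∀ r : R, r * a ∈ P) {c x : R} :
    Submodule.Quotient.mk x ∈ LinearMap.ker (lmulQuot hleft c) ↔ c * x ∈ P := by
  rw [LinearMap.mem_ker, lmulQuot_mk, Submodule.Quotient.mk_eq_zero]

theorem range_lmulQuot_le (hleft : ∀ a ∈ P, ∀ r : R, r * a ∈ P) {c : R}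
    {X : Submodule Rᵐᵒᵖ (R ⧸ P)} (hc : Submodule.Quotient.mk c ∈ X) :
    LinearMap.range (lmulQuot hleft c) ≤ X := by
  rintro _ ⟨y, rfl⟩
  obtain ⟨x, rfl⟩ := Submodule.mkQ_surjective P y
  exact X.smul_mem (MulOpposite.op x) hc

theorem map_mkQ_inf_ker_lmulQuot_eq_bot (hleft : ∀ a ∈ P, ∀ r : R, r * a ∈ P) {c : R}
    {X : Submodule Rᵐᵒᵖ R} (h : ∀ x ∈ X, c * x ∈ P → x ∈ P) :
    X.map P.mkQ ⊓ LinearMap.ker (lmulQuot hleft c) = ⊥ := by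
  refine eq_bot_iff.mpr ?_
  rintro _ ⟨⟨x, hx, rfl⟩, hker⟩
  exact (Submodule.mem_bot _).mpr ((Submodule.Quotient.mk_eq_zero P).mpr
    (h x hx ((mk_mem_ker_lmulQuot hleft).mp hker)))

theorem eq_bot_of_inf_eq_bot_of_map_lmulQuot_le (hleft : ∀ a ∈ P, ∀ r : R, r * a ∈ P)
    (hprime : ∀ a b : R, (∀ r : R, a * r * b ∈ P) → a ∈ P ∨ b ∈ P)
    {T B : Submodule Rᵐᵒᵖ (R ⧸ P)} (hT : ∀ r, T.map (lmulQuot hleft r) ≤ T) (hT0 : T ≠ ⊥)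
    (hTB : T ⊓ B = ⊥) : B = ⊥ := by
  by_contra hB0
  obtain ⟨x', hxB, hx0⟩ := Submodule.exists_mem_ne_zero_of_ne_bot hB0
  obtain ⟨t', htT, ht0⟩ := Submodule.exists_mem_ne_zero_of_ne_bot hT0
  obtain ⟨x, rfl⟩ := Submodule.mkQ_surjective P x'
  obtain ⟨t, rfl⟩ := Submodule.mkQ_surjective P t'
  have hxrt : ∀ r, x * r * t ∈ P := fun r => by
    have hmem : Submodule.Quotient.mk (x * r * t) ∈ T ⊓ B :=
      ⟨hT (x * r) ⟨_, htT, rfl⟩, by rw [mul_assoc]; exact B.smul_mem (MulOpposite.op (r * t)) hxB⟩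
    rwa [hTB, Submodule.mem_bot, Submodule.Quotient.mk_eq_zero] at hmem
  rcases hprime x t hxrt with hx | ht
  · exact hx0 ((Submodule.Quotient.mk_eq_zero P).mpr hx)
  · exact ht0 ((Submodule.Quotient.mk_eq_zero P).mpr ht)

/-- A maximal submodule `T ⊇ X` of deviation `≤ k` is a two-sided ideal; Goldie's element `c`
of `T` has zero annihilator by primeness, so `R/P ≅ cR/P ⊆ T`. -/
theorem kdimLE_quotient_of_submodule [IsNoetherian Rᵐᵒᵖ R]
    (hleft : ∀ a ∈ P, ∀ r : R, r * a ∈ P)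
    (hprime : ∀ a b : R, (∀ r : R, a * r * b ∈ P) → a ∈ P ∨ b ∈ P) {k : ℕ}
    {X : Submodule Rᵐᵒᵖ (R ⧸ P)} (hX : X ≠ ⊥) (hXk : devLE k (Submodule Rᵐᵒᵖ X)) :
    kdimLE R (R ⧸ P) k := by
  obtain ⟨T, hXT, hT⟩ := exists_maximal_ge_of_wellFoundedGT
    (fun Y : Submodule Rᵐᵒᵖ (R ⧸ P) => devLE k (Submodule Rᵐᵒᵖ Y)) X hXk
  obtain ⟨c, hcT, hc⟩ := exists_mem_forall_mul_mem_imp_mem hleft hprime (T.comap P.mkQ)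
  have hTc : T ⊓ LinearMap.ker (lmulQuot hleft c) = ⊥ := by
    simpa only [Submodule.map_comap_eq_of_surjective (Submodule.mkQ_surjective P)] using
      map_mkQ_inf_ker_lmulQuot_eq_bot hleft hc
  have hker : LinearMap.ker (lmulQuot hleft c) = ⊥ :=
    eq_bot_of_inf_eq_bot_of_map_lmulQuot_le hleft hprime
      (fun r => map_le_of_maximal_devLE hT _) (ne_bot_of_le_ne_bot hX hXT) hTc
  have hrange : devLE k (Submodule Rᵐᵒᵖ (LinearMap.range (lmulQuot hleft c))) :=
    devLE_submodule_of_injective (Submodule.inclusion_injective (range_lmulQuot_le hleft hcT))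
      hT.1
  exact devLE_submodule_of_injective
    (LinearEquiv.ofInjective _ (LinearMap.ker_eq_bot.mp hker)).injective hrange

theorem mem_of_mul_mem_of_kdimLE_quotient_range [IsNoetherian Rᵐᵒᵖ R]
    (hleft : ∀ a ∈ P, ∀ r : R, r * a ∈ P)
    (hprime : ∀ a b : R, (∀ r : R, a * r * b ∈ P) → a ∈ P ∨ b ∈ P) {k : ℕ}
    (hPk : ¬ kdimLE R (R ⧸ P) k) {t : R}
    (ht : kdimLE R ((R ⧸ P) ⧸ LinearMap.range (lmulQuot hleft t)) k) {x : R}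
    (hxt : x * t ∈ P) : x ∈ P := by
  by_contra hx
  refine hPk (kdimLE_quotient_of_submodule hleft hprime
    (X := LinearMap.range (lmulQuot hleft x)) ?_ (devLE_range_of_le_ker ?_ ht))
  · refine (Submodule.ne_bot_iff _).mpr
      ⟨_, ⟨Submodule.Quotient.mk 1, by rw [lmulQuot_mk, mul_one]⟩, ?_⟩
    exact fun h => hx ((Submodule.Quotient.mk_eq_zero P).mp h)
  · rintro _ ⟨y, rfl⟩
    obtain ⟨y, rfl⟩ := Submodule.mkQ_surjective P y
    rw [Submodule.mkQ_apply, lmulQuot_mk, mk_mem_ker_lmulQuot, ← mul_assoc]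
    exact rightIdeal_mul_mem hxt y

theorem exists_mem_regModP_of_kdimLE [IsNoetherian Rᵐᵒᵖ R]
    (hleft : ∀ a ∈ P, ∀ r : R, r * a ∈ P)
    (hprime : ∀ a b : R, (∀ r : R, a * r * b ∈ P) → a ∈ P ∨ b ∈ P) {m : ℕ} (hm : 0 < m)
    (hPm : kdimLE R (R ⧸ P) m) (hPm' : ¬ kdimLE R (R ⧸ P) (m - 1))
    {I : Submodule Rᵐᵒᵖ R} (hI : kdimLE R (R ⧸ I) (m - 1)) : ∃ t ∈ I, regModP R P t := by
  obtain ⟨t, htI, ht⟩ := exists_mem_forall_mul_mem_imp_mem hleft hprime I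
  have hJ : kdimLE R ((R ⧸ P) ⧸ I.map P.mkQ) (m - 1) := by
    refine devLE_submodule_of_surjective (f := I.mapQ _ P.mkQ (Submodule.le_comap_map _ _))
      (fun w => ?_) hI
    obtain ⟨y, rfl⟩ := Submodule.mkQ_surjective _ w
    obtain ⟨x, rfl⟩ := Submodule.mkQ_surjective P y
    exact ⟨Submodule.Quotient.mk x, rfl⟩
  have hker : LinearMap.ker (lmulQuot hleft t) = ⊥ := by
    by_contra h
    refine hPm' (kdimLE_quotient_of_submodule hleft hprime h
      (devLE_submodule_of_disjoint ?_ hJ))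
    rw [disjoint_iff, inf_comm]
    exact map_mkQ_inf_ker_lmulQuot_eq_bot hleft ht
  have hquot := devLE_quotient_range_of_injective (LinearMap.ker_eq_bot.mp hker)
    ((Nat.sub_add_cancel hm).symm ▸ hPm)
  refine ⟨t, htI, fun x => ⟨fun htx => ?_,
    mem_of_mul_mem_of_kdimLE_quotient_range hleft hprime hPm' hquot⟩⟩
  have hx := (mk_mem_ker_lmulQuot hleft).mpr htx
  rwa [hker, Submodule.mem_bot, Submodule.Quotient.mk_eq_zero] at hx

end PrimeQuotient

theorem stmt6_general (R : Type) [Ring R] [IsNoetherian Rᵐᵒᵖ R]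
    (m : ℕ) (hm : 0 < m)
    (hint : ∀ I : Submodule Rᵐᵒᵖ R,
      (∀ P ∈ xSet R m, ∃ t ∈ I, regModP R P t) → ∃ t ∈ I, t ∈ vSet R m) :
    ∀ I ∈ gFilt R m, ∃ t ∈ I, t ∈ vSet R m :=
  fun _ hI => hint _ fun _ ⟨hP, hPm, hPm'⟩ =>
    exists_mem_regModP_of_kdimLE hP.1 hP.2.2 hm hPm hPm' hI

theorem stmt6 (R : Type) [Ring R] [Nontrivial R] [IsNoetherian Rᵐᵒᵖ R]
    (hprime : ∀ a b : R, (∀ r : R, a * r * b = 0) → a = 0 ∨ b = 0)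
    (n m : ℕ) (hm : 0 < m) (hmn : m < n)
    (hdim : kdimLE R R n ∧ ¬ kdimLE R R (n - 1))
    (hint : ∀ I : Submodule Rᵐᵒᵖ R,
      (∀ P ∈ xSet R m, ∃ t ∈ I, regModP R P t) → ∃ t ∈ I, t ∈ vSet R m) :
    ∀ I ∈ gFilt R m, ∃ t ∈ I, t ∈ vSet R m :=
  stmt6_general R m hm hint
end

section
/- For q ∈ Q, one has q ∈ R^e if and only if Kdim(q'R) < m, where q' = q + R ∈ Q/R and q'R is the cyclic R-submodule of Q/R generated by q'. That is, R^e = {q ∈ Q : Kdim((qR + R)/R) < m}. -/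
set_option linter.unusedVariables false

/-!
The annihilator of `q + R` in `Q/R` is the right ideal `K = {r | q r ∈ R}`, and `r ↦ q r + R`
induces `R/K ≅ (qR + R)/R`, so `Kdim((qR + R)/R) < m` says exactly that `K ∈ g`. Since `g` is
closed under enlarging right ideals (a surjection `R/J → R/K` cannot raise Krull dimension),
`K ∈ g` holds iff some `J ∈ g` satisfies `qJ ⊆ R`, i.e. iff `q ∈ R^e`.
-/

theorem devLE_of_monotone_of_injective (k : ℕ) :
    ∀ {A B : Type*} [Preorder A] [Preorder B] (g : B → A),
      Monotone g → Function.Injective g → devLE k A → devLE k B := by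
  induction k with
  | zero =>
    intro A B _ _ g hmono hinj h f hf
    obtain ⟨N, hN⟩ := h (g ∘ f) (hmono.comp_antitone hf)
    exact ⟨N, fun i hi => hinj (hN i hi)⟩
  | succ k ih =>
    intro A B _ _ g hmono hinj h f hf
    obtain ⟨N, hN⟩ := h (g ∘ f) (hmono.comp_antitone hf)
    refine ⟨N, fun i hi => ih (fun x => ⟨g x.1, hmono x.2.1, hmono x.2.2⟩)
      (fun _ _ hab => hmono hab)
      (fun _ _ hab => Subtype.ext (hinj (congrArg Subtype.val hab))) (hN i hi)⟩

section KrullDimension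

variable {R M N : Type*} [Ring R] [AddCommGroup M] [Module Rᵐᵒᵖ M]
  [AddCommGroup N] [Module Rᵐᵒᵖ N] {k : ℕ}

theorem kdimLE_of_surjective_s8 (φ : M →ₗ[Rᵐᵒᵖ] N) (hφ : Function.Surjective φ)
    (h : kdimLE R M k) : kdimLE R N k :=
  devLE_of_monotone_of_injective k (Submodule.comap φ) (fun _ _ => Submodule.comap_mono)
    (Submodule.comap_injective_of_surjective hφ) h

theorem kdimLE_congr (e : M ≃ₗ[Rᵐᵒᵖ] N) : kdimLE R M k ↔ kdimLE R N k :=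
  ⟨kdimLE_of_surjective_s8 e.toLinearMap e.surjective,
    kdimLE_of_surjective_s8 e.symm.toLinearMap e.symm.surjective⟩

theorem mem_gFilt_of_le {m : ℕ} {J K : Submodule Rᵐᵒᵖ R} (hJ : J ∈ gFilt R m) (hJK : J ≤ K) :
    K ∈ gFilt R m :=
  kdimLE_of_surjective_s8 (Submodule.factor hJK) (Submodule.factor_surjective hJK) hJ

variable (R) in
def rightSpanMap (x : M) : R →ₗ[Rᵐᵒᵖ] M where
  toFun r := MulOpposite.op r • x
  map_add' a b := by rw [MulOpposite.op_add, add_smul]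
  map_smul' s r := by
    rw [MulOpposite.smul_eq_mul_unop, MulOpposite.op_mul, MulOpposite.op_unop, mul_smul]
    rfl

theorem range_rightSpanMap (x : M) :
    LinearMap.range (rightSpanMap R x) = Submodule.span Rᵐᵒᵖ {x} := by
  ext y
  rw [LinearMap.mem_range, Submodule.mem_span_singleton]
  exact ⟨fun ⟨r, hr⟩ => ⟨MulOpposite.op r, hr⟩, fun ⟨s, hs⟩ => ⟨s.unop, hs⟩⟩

theorem kdimLE_span_singleton_iff (x : M) :
    kdimLE R (Submodule.span Rᵐᵒᵖ {x}) k ↔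
      kdimLE R (R ⧸ LinearMap.ker (rightSpanMap R x)) k :=
  (kdimLE_congr (((rightSpanMap R x).quotKerEquivRange).trans
    (LinearEquiv.ofEq _ _ (range_rightSpanMap x)))).symm

theorem mem_ker_rightSpanMap_mk (P : Submodule Rᵐᵒᵖ M) (x : M) (r : R) :
    r ∈ LinearMap.ker (rightSpanMap R (Submodule.Quotient.mk x : M ⧸ P)) ↔
      MulOpposite.op r • x ∈ P := by
  rw [LinearMap.mem_ker, rightSpanMap, LinearMap.coe_mk, AddHom.coe_mk,
    ← Submodule.Quotient.mk_smul, Submodule.Quotient.mk_eq_zero]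

end KrullDimension

section QuotientRing

variable {R Q : Type*} [Ring R] [Ring Q] (f : R →+* Q)

theorem mem_span_range_qMod_iff (x : Q) :
    letI : Module Rᵐᵒᵖ Q := qMod R Q f
    x ∈ Submodule.span Rᵐᵒᵖ (Set.range f) ↔ x ∈ Set.range f := by
  let _ : Module Rᵐᵒᵖ Q := qMod R Q f
  let image : Submodule Rᵐᵒᵖ Q :=
    { carrier := Set.range f
      add_mem' := by rintro _ _ ⟨a, rfl⟩ ⟨b, rfl⟩; exact ⟨a + b, map_add f a b⟩
      zero_mem' := ⟨0, map_zero f⟩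
      smul_mem' := by rintro s _ ⟨a, rfl⟩; exact ⟨a * s.unop, map_mul f a s.unop⟩ }
  exact SetLike.ext_iff.mp (Submodule.span_eq image) x

theorem mem_reSet_iff_ker_mem_gFilt (m : ℕ) (q : Q) :
    letI : Module Rᵐᵒᵖ Q := qMod R Q f
    q ∈ reSet R Q f m ↔ LinearMap.ker
      (rightSpanMap R (Submodule.Quotient.mk q : Q ⧸ Submodule.span Rᵐᵒᵖ (Set.range f)))
      ∈ gFilt R m := by
  let _ : Module Rᵐᵒᵖ Q := qMod R Q f
  have mem_ker (r : R) : r ∈ LinearMap.ker (rightSpanMap R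
      (Submodule.Quotient.mk q : Q ⧸ Submodule.span Rᵐᵒᵖ (Set.range f))) ↔
      ∃ r' : R, q * f r = f r' := by
    rw [mem_ker_rightSpanMap_mk, mem_span_range_qMod_iff]
    exact ⟨fun ⟨r', h⟩ => ⟨r', h.symm⟩, fun ⟨r', h⟩ => ⟨r', h.symm⟩⟩
  constructor
  · rintro ⟨J, hJ, hJq⟩
    exact mem_gFilt_of_le hJ fun j hj => (mem_ker j).mpr (hJq j hj)
  · intro hker
    exact ⟨_, hker, fun j hj => (mem_ker j).mp hj⟩

end QuotientRing

theorem stmt8_general (R : Type) [Ring R] (m : ℕ) (Q : Type) [Ring Q] (f : R →+* Q) :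
    letI : Module Rᵐᵒᵖ Q := qMod R Q f
    ∀ q : Q, q ∈ reSet R Q f m ↔
      kdimLE R ↥(Submodule.span Rᵐᵒᵖ
        {(Submodule.Quotient.mk q : Q ⧸ Submodule.span Rᵐᵒᵖ (Set.range f))}) (m - 1) := by
  let _ : Module Rᵐᵒᵖ Q := qMod R Q f
  intro q
  rw [mem_reSet_iff_ker_mem_gFilt, kdimLE_span_singleton_iff]
  rfl

theorem stmt8 (R : Type) [Ring R] [Nontrivial R] [IsNoetherian Rᵐᵒᵖ R]
    (hprime : ∀ a b : R, (∀ r : R, a * r * b = 0) → a = 0 ∨ b = 0)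
    (n m : ℕ) (hm : 0 < m) (hmn : m < n)
    (hdim : kdimLE R R n ∧ ¬ kdimLE R R (n - 1))
    (Q : Type) [Ring Q] (f : R →+* Q) (hQ : isRightQuotientRing R Q f) :
    letI : Module Rᵐᵒᵖ Q := qMod R Q f
    ∀ q : Q, q ∈ reSet R Q f m ↔
      kdimLE R ↥(Submodule.span Rᵐᵒᵖ
        {(Submodule.Quotient.mk q : Q ⧸ Submodule.span Rᵐᵒᵖ (Set.range f))}) (m - 1) :=
  stmt8_general R m Q f
end
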